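/- arXiv:2407.14764 — 5 statements merged into one kernel-verified Lean document; each statement's English description precedes it below -/
import Mathlib

section
/- (Yannakakis' theorem for affine semigroups) Let Γ be a positive affine semigroup with slack matrix S_Γ. Then the minimal size of a lift of Γ equals the nonnegative integer rank of S_Γ, i.e. min{size of ι : Γ → Γ̃ a lift of Γ} = rank_{ℤ₊}(S_Γ). -/
open Matrix BigOperators

noncomputable section

/-- The ambient space `ℝ^n`. -/
abbrev V (n : ℕ) := Fin n → ℝ

/-- The difference set `Λ_Γ = {x - y : x, y ∈ Γ}` of a set `Γ ⊆ ℝ^n`. -/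
def diffSet {n : ℕ} (Γ : Set (V n)) : Set (V n) := {z | ∃ x ∈ Γ, ∃ y ∈ Γ, z = x - y}

/-- A set is discrete if each of its points is isolated in it. -/
def IsDiscreteSet {n : ℕ} (Λ : Set (V n)) : Prop :=
  ∀ x ∈ Λ, ∃ ε : ℝ, 0 < ε ∧ ∀ y ∈ Λ, dist y x < ε → y = x

/-- An affine semigroup: a finitely generated additive submonoid of `ℝ^n` whose
difference group is discrete (a lattice). -/
def IsAffineSemigroup {n : ℕ} (Γ : Set (V n)) : Prop :=
  (∃ S : Finset (V n), (AddSubmonoid.closure (S : Set (V n)) : Set (V n)) = Γ) ∧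
    IsDiscreteSet (diffSet Γ)

/-- A set is positive if `0` is its only element whose negative also belongs to it. -/
def IsPositive {n : ℕ} (Γ : Set (V n)) : Prop := ∀ x ∈ Γ, -x ∈ Γ → x = 0

/-- The convex cone `K_Γ` of all nonnegative real combinations of elements of `Γ`. -/
def coneOf {n : ℕ} (Γ : Set (V n)) : Set (V n) :=
  {y | ∃ (k : ℕ) (c : Fin k → ℝ) (v : Fin k → V n),
    (∀ i, 0 ≤ c i) ∧ (∀ i, v i ∈ Γ) ∧ y = ∑ i, c i • v i}

/-- The dual cone `K* = {y : ⟨x,y⟩ ≥ 0 for all x ∈ K}`. -/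
def dualCone {n : ℕ} (K : Set (V n)) : Set (V n) := {y | ∀ x ∈ K, 0 ≤ x ⬝ᵥ y}

/-- The dual lattice `Λ* = {w ∈ span(Λ) : ⟨w,v⟩ ∈ ℤ for all v ∈ Λ}`. -/
def dualLattice {n : ℕ} (Λ : Set (V n)) : Set (V n) :=
  {w | w ∈ Submodule.span ℝ Λ ∧ ∀ v ∈ Λ, ∃ m : ℤ, w ⬝ᵥ v = (m : ℝ)}

/-- The dual affine semigroup `Γ* = (Λ_Γ)* ∩ (K_Γ)*`. -/
def dualSemigroup {n : ℕ} (Γ : Set (V n)) : Set (V n) :=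
  dualLattice (diffSet Γ) ∩ dualCone (coneOf Γ)

/-- `A` generates the additive monoid `Γ`. -/
def IsGenSet {n : ℕ} (A Γ : Set (V n)) : Prop := (AddSubmonoid.closure A : Set (V n)) = Γ

/-- `A` is a minimal generating set of the additive monoid `Γ`: it generates, and no
proper subset of it generates. -/
def IsMinGenSet {n : ℕ} (A Γ : Set (V n)) : Prop :=
  IsGenSet A Γ ∧ ∀ B ⊂ A, ¬ IsGenSet B Γ

/-- `S` is the slack matrix of the positive affine semigroup `Γ`: its `(i,j)` entry is
`⟨a i, b j⟩` where `a`, `b` enumerate the minimal generating sets of `Γ` and `Γ*`. -/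
def IsSlackMatrix {n k l : ℕ} (Γ : Set (V n)) (S : Matrix (Fin k) (Fin l) ℤ) : Prop :=
  ∃ (a : Fin k → V n) (b : Fin l → V n),
    Function.Injective a ∧ Function.Injective b ∧
    IsMinGenSet (Set.range a) Γ ∧ IsMinGenSet (Set.range b) (dualSemigroup Γ) ∧
    ∀ i j, (S i j : ℝ) = a i ⬝ᵥ b j

/-- The `i`-th row of an integer matrix, viewed as a real vector. -/
def rowVec {k l : ℕ} (S : Matrix (Fin k) (Fin l) ℤ) (i : Fin k) : V l := fun j => (S i j : ℝ)

/-- The `j`-th column of an integer matrix, viewed as a real vector. -/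
def colVec {k l : ℕ} (S : Matrix (Fin k) (Fin l) ℤ) (j : Fin l) : V k := fun i => (S i j : ℝ)

/-- `Γ_S^row`: all nonnegative integer combinations of the rows of `S`. -/
def GammaRow {k l : ℕ} (S : Matrix (Fin k) (Fin l) ℤ) : Set (V l) :=
  {x | ∃ c : Fin k → ℕ, x = ∑ i, (c i : ℝ) • rowVec S i}

/-- `Γ_S^col`: all nonnegative integer combinations of the columns of `S`. -/
def GammaCol {k l : ℕ} (S : Matrix (Fin k) (Fin l) ℤ) : Set (V k) :=
  {x | ∃ c : Fin l → ℕ, x = ∑ j, (c j : ℝ) • colVec S j}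

/-- `Λ_S^row`: all integer combinations of the rows of `S`. -/
def LambdaRow {k l : ℕ} (S : Matrix (Fin k) (Fin l) ℤ) : Set (V l) :=
  {x | ∃ c : Fin k → ℤ, x = ∑ i, (c i : ℝ) • rowVec S i}

/-- `Λ_S^col`: all integer combinations of the columns of `S`. -/
def LambdaCol {k l : ℕ} (S : Matrix (Fin k) (Fin l) ℤ) : Set (V k) :=
  {x | ∃ c : Fin l → ℤ, x = ∑ j, (c j : ℝ) • colVec S j}

/-- `K_S^row`: all nonnegative real combinations of the rows of `S`. -/
def KRow {k l : ℕ} (S : Matrix (Fin k) (Fin l) ℤ) : Set (V l) :=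
  {x | ∃ c : Fin k → ℝ, (∀ i, 0 ≤ c i) ∧ x = ∑ i, c i • rowVec S i}

/-- `K_S^col`: all nonnegative real combinations of the columns of `S`. -/
def KCol {k l : ℕ} (S : Matrix (Fin k) (Fin l) ℤ) : Set (V k) :=
  {x | ∃ c : Fin l → ℝ, (∀ j, 0 ≤ c j) ∧ x = ∑ j, c j • colVec S j}

/-- `Row(S)`: the row space of `S` over `ℝ`. -/
def RowSpace {k l : ℕ} (S : Matrix (Fin k) (Fin l) ℤ) : Set (V l) :=
  (Submodule.span ℝ (Set.range (rowVec S)) : Set (V l))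

/-- `Col(S)`: the column space of `S` over `ℝ`. -/
def ColSpace {k l : ℕ} (S : Matrix (Fin k) (Fin l) ℤ) : Set (V k) :=
  (Submodule.span ℝ (Set.range (colVec S)) : Set (V k))

/-- `ℤ^l` viewed inside `ℝ^l`. -/
def intPts (l : ℕ) : Set (V l) := {x | ∀ j, ∃ m : ℤ, x j = (m : ℝ)}

/-- `ℤ₊^l` viewed inside `ℝ^l`. -/
def nnIntPts (l : ℕ) : Set (V l) := {x | ∀ j, ∃ m : ℕ, x j = (m : ℝ)}

/-- `ℝ₊^l`: the nonnegative orthant. -/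
def nnPts (l : ℕ) : Set (V l) := {x | ∀ j, 0 ≤ x j}

/-- `ι` (a linear map restricting to an additive semigroup homomorphism `Γ → Γ'`) is a
lift of the positive affine semigroup `Γ`: `Γ'` is a positive affine semigroup and the
adjoint `ι*` (characterized on `Γ` by `⟨x, ι*(y)⟩ = ⟨ι(x), y⟩`) satisfies
`ι*(Γ'*) = Γ*`. -/
structure IsLift {n N : ℕ} (Γ : Set (V n)) (Γ' : Set (V N)) (ι : (V n) →ₗ[ℝ] (V N)) : Prop where
  lift_semigroup : IsAffineSemigroup Γ'
  lift_positive : IsPositive Γ'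
  maps_to : ∀ x ∈ Γ, ι x ∈ Γ'
  adjoint_mem : ∀ y ∈ dualSemigroup Γ', ∃ z ∈ dualSemigroup Γ, ∀ x ∈ Γ, x ⬝ᵥ z = (ι x) ⬝ᵥ y
  adjoint_surj : ∀ z ∈ dualSemigroup Γ, ∃ y ∈ dualSemigroup Γ', ∀ x ∈ Γ, x ⬝ᵥ z = (ι x) ⬝ᵥ y

/-- The nonnegative integer rank: the least inner dimension of a factorization
`A = B * C` with `B`, `C` nonnegative integer matrices. -/
def nnIntRank {m l : Type*} [Fintype m] [Fintype l] (A : Matrix m l ℤ) : ℕ :=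
  sInf {r : ℕ | ∃ (B : Matrix m (Fin r) ℤ) (C : Matrix (Fin r) l ℤ),
    (∀ i j, 0 ≤ B i j) ∧ (∀ i j, 0 ≤ C i j) ∧ A = B * C}

/-- The nonnegative rank: the least inner dimension of a factorization
`A = B * C` with `B`, `C` nonnegative real matrices. -/
def nnRank {m l : Type*} [Fintype m] [Fintype l] (A : Matrix m l ℤ) : ℕ :=
  sInf {r : ℕ | ∃ (B : Matrix m (Fin r) ℝ) (C : Matrix (Fin r) l ℝ),
    (∀ i j, 0 ≤ B i j) ∧ (∀ i j, 0 ≤ C i j) ∧ A.map (fun z => (z : ℝ)) = B * C}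

/-- The Fibonacci semigroup `Γ^Fib_n = ℤ² ∩ {(x,y) : 0 ≤ F_{2n}·y ≤ F_{2n+2}·x}`
(with `Nat.fib`, so `F 1 = F 2 = 1`). -/
def GammaFib (n : ℕ) : Set (V 2) :=
  {p | (∃ a : ℤ, p 0 = (a : ℝ)) ∧ (∃ b : ℤ, p 1 = (b : ℝ)) ∧
    0 ≤ (Nat.fib (2 * n) : ℝ) * p 1 ∧
    (Nat.fib (2 * n) : ℝ) * p 1 ≤ (Nat.fib (2 * n + 2) : ℝ) * p 0}

/-- Fibonacci numbers extended to negative indices by `F_{-m} = (-1)^{m+1} F_m`. -/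
def fibZ (m : ℤ) : ℤ :=
  if 0 ≤ m then (Nat.fib m.toNat : ℤ)
  else (-1) ^ ((-m).toNat + 1) * (Nat.fib (-m).toNat : ℤ)

/-- The `(n+1) × (n+1)` Toeplitz matrix with `(i,j)` entry `F_{2(i-j)+1}`. -/
def Mfib (n : ℕ) : Matrix (Fin (n + 1)) (Fin (n + 1)) ℤ :=
  fun i j => fibZ (2 * ((i : ℤ) - (j : ℤ)) + 1)

/-- `‖A‖₁`: the sum of all entries of a matrix. -/
def entrySum {m l : Type*} [Fintype m] [Fintype l] (A : Matrix m l ℤ) : ℤ := ∑ i, ∑ j, A i j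

/-!
If `ι : Γ → Γ'` is a lift and `g_1, …, g_r` are the minimal generators of `Γ'`, write
`ι(a_i) = ∑ B_{it} g_t` with `B_{it} ∈ ℤ₊` and pick `y_j ∈ Γ'*` with `ι*(y_j) = b_j`; then
`S = B C` with `C_{tj} = ⟨g_t, y_j⟩ ∈ ℤ₊`, so `rank_{ℤ₊} S ≤ r`.

Conversely, a factorization `S = B C` of inner dimension `r` gives the lift
`x ↦ (⟨x, b_j⟩)_j` of `Γ` into the semigroup spanned by the rows of `C`, which has at most `r`
minimal generators. Its adjoint `y ↦ ∑ y_j b_j` maps onto `Γ*` because every `z ∈ Γ*` is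
`∑ m_j b_j` with `m ∈ ℤ₊^l`, and the orthogonal projection of `m` onto the span of the rows
pairs with the row semigroup exactly as `m` does, so it lies in its dual.
-/

theorem AddSubmonoid.exists_finite_subset_of_mem_closure {M : Type*} [AddMonoid M] {A : Set M}
    {x : M} (hx : x ∈ AddSubmonoid.closure A) :
    ∃ t ⊆ A, t.Finite ∧ x ∈ AddSubmonoid.closure t := by
  induction hx using AddSubmonoid.closure_induction with
  | mem y hy => exact ⟨{y}, by simpa using hy, Set.finite_singleton y,
      AddSubmonoid.subset_closure rfl⟩
  | zero => exact ⟨∅, Set.empty_subset A, Set.finite_empty, zero_mem _⟩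
  | add y z _ _ hy hz =>
      obtain ⟨t₁, ht₁A, ht₁, hyt⟩ := hy
      obtain ⟨t₂, ht₂A, ht₂, hzt⟩ := hz
      exact ⟨t₁ ∪ t₂, Set.union_subset ht₁A ht₂A, ht₁.union ht₂,
        add_mem (AddSubmonoid.closure_mono Set.subset_union_left hyt)
          (AddSubmonoid.closure_mono Set.subset_union_right hzt)⟩

theorem IsMinGenSet.finite {N : ℕ} {A Γ : Set (V N)} (hA : IsMinGenSet A Γ)
    (hfg : ∃ F : Finset (V N), (AddSubmonoid.closure (F : Set (V N)) : Set (V N)) = Γ) :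
    A.Finite := by
  obtain ⟨F, hF⟩ := hfg
  have hFA : ∀ s ∈ F, ∃ t ⊆ A, t.Finite ∧ s ∈ AddSubmonoid.closure t := fun s hs =>
    AddSubmonoid.exists_finite_subset_of_mem_closure <| by
      rw [← SetLike.mem_coe, hA.1, ← hF]; exact AddSubmonoid.subset_closure hs
  choose t htA ht hst using hFA
  set T := ⋃ (s) (hs : s ∈ F), t s hs
  have hTA : T ⊆ A := Set.iUnion₂_subset htA
  have hT : IsGenSet T Γ := by
    refine le_antisymm (hA.1 ▸ AddSubmonoid.closure_mono hTA) ?_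
    rw [← hF, SetLike.coe_subset_coe, AddSubmonoid.closure_le]
    exact fun s hs => AddSubmonoid.closure_mono
      (fun x hx => Set.mem_iUnion₂.mpr ⟨s, hs, hx⟩) (hst s hs)
  obtain rfl : T = A := by_contra fun hne => hA.2 T (hTA.ssubset_of_ne hne) hT
  exact F.finite_toSet.biUnion' ht

theorem exists_isMinGenSet_subset {N : ℕ} {F : Set (V N)} (hF : F.Finite) :
    ∃ A ⊆ F, IsMinGenSet A (AddSubmonoid.closure F) := by
  obtain ⟨A, ⟨hAF, hA⟩, hmin⟩ := (hF.finite_subsets.subset (fun B hB => hB.1) :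
      {B | B ⊆ F ∧ IsGenSet B (AddSubmonoid.closure F)}.Finite).exists_minimal
    ⟨F, subset_rfl, rfl⟩
  exact ⟨A, hAF, hA, fun B hBA hB => hBA.not_subset (hmin ⟨hBA.subset.trans hAF, hB⟩ hBA.subset)⟩

theorem span_diffSet {n : ℕ} {Γ : Set (V n)} (h0 : (0 : V n) ∈ Γ) :
    Submodule.span ℝ (diffSet Γ) = Submodule.span ℝ Γ := by
  apply le_antisymm <;> rw [Submodule.span_le]
  · rintro _ ⟨x, hx, y, hy, rfl⟩
    exact sub_mem (Submodule.subset_span hx) (Submodule.subset_span hy)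
  · exact fun x hx => Submodule.subset_span ⟨x, hx, 0, h0, (sub_zero x).symm⟩

theorem dualCone_coneOf {n : ℕ} (Γ : Set (V n)) :
    dualCone (coneOf Γ) = {y | ∀ x ∈ Γ, 0 ≤ x ⬝ᵥ y} := by
  ext y
  refine ⟨fun hy x hx => hy x ⟨1, fun _ => 1, fun _ => x, fun _ => zero_le_one, fun _ => hx,
    by simp⟩, ?_⟩
  rintro hy _ ⟨m, c, v, hc, hv, rfl⟩
  rw [sum_dotProduct]
  exact Finset.sum_nonneg fun i _ => by
    rw [smul_dotProduct, smul_eq_mul]; exact mul_nonneg (hc i) (hy _ (hv i))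

theorem mem_dualSemigroup_iff {n : ℕ} {Γ : Set (V n)} (h0 : (0 : V n) ∈ Γ) {y : V n} :
    y ∈ dualSemigroup Γ ↔
      y ∈ Submodule.span ℝ Γ ∧ ∀ x ∈ Γ, (∃ m : ℤ, x ⬝ᵥ y = m) ∧ 0 ≤ x ⬝ᵥ y := by
  simp only [dualSemigroup, dualLattice, Set.mem_inter_iff, Set.mem_ofPred_eq, span_diffSet h0,
    dualCone_coneOf, forall_and, and_assoc]
  refine and_congr_right fun _ => and_congr_left fun _ => ⟨fun h x hx => ?_, ?_⟩
  · obtain ⟨m, hm⟩ := h x ⟨x, hx, 0, h0, (sub_zero x).symm⟩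
    exact ⟨m, dotProduct_comm x y ▸ hm⟩
  · rintro h _ ⟨x, hx, x', hx', rfl⟩
    obtain ⟨m, hm⟩ := h x hx
    obtain ⟨m', hm'⟩ := h x' hx'
    refine ⟨m - m', ?_⟩
    rw [dotProduct_sub, dotProduct_comm, hm, dotProduct_comm, hm', Int.cast_sub]

theorem exists_mem_forall_dotProduct_eq {l : ℕ} (W : Submodule ℝ (V l)) (y₀ : V l) :
    ∃ y ∈ W, ∀ v ∈ W, v ⬝ᵥ y = v ⬝ᵥ y₀ := by
  let W' : Submodule ℝ (EuclideanSpace ℝ (Fin l)) :=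
    W.comap (WithLp.linearEquiv 2 ℝ (V l)).toLinearMap
  obtain ⟨y, hy, z, hz, hyz⟩ := W'.exists_add_mem_mem_orthogonal (WithLp.toLp 2 y₀)
  refine ⟨y.ofLp, hy, fun v hv => ?_⟩
  have hvz : v ⬝ᵥ z.ofLp = 0 := by
    simpa [EuclideanSpace.inner_eq_star_dotProduct, dotProduct_comm] using hz (WithLp.toLp 2 v) hv
  rw [show y₀ = y.ofLp + z.ofLp from congrArg WithLp.ofLp hyz, dotProduct_add, hvz, add_zero]

theorem exists_nat_dotProduct_eq {l : ℕ} {x y : V l} (hx : x ∈ nnIntPts l)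
    (hy : y ∈ nnIntPts l) : ∃ m : ℕ, x ⬝ᵥ y = m := by
  choose p hp using hx
  choose q hq using hy
  exact ⟨∑ j, p j * q j, by simp [dotProduct, hp, hq]⟩

theorem exists_mem_dualSemigroup_forall_dotProduct_eq {l : ℕ} {Γ : Set (V l)} (h0 : (0 : V l) ∈ Γ)
    (hΓ : Γ ⊆ nnIntPts l) {y₀ : V l} (hy₀ : y₀ ∈ nnIntPts l) :
    ∃ y ∈ dualSemigroup Γ, ∀ x ∈ Γ, x ⬝ᵥ y = x ⬝ᵥ y₀ := by
  obtain ⟨y, hyW, hy⟩ := exists_mem_forall_dotProduct_eq (Submodule.span ℝ Γ) y₀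
  have hyΓ : ∀ x ∈ Γ, x ⬝ᵥ y = x ⬝ᵥ y₀ := fun x hx => hy x (Submodule.subset_span hx)
  refine ⟨y, (mem_dualSemigroup_iff h0).2 ⟨hyW, fun x hx => ?_⟩, hyΓ⟩
  obtain ⟨m, hm⟩ := exists_nat_dotProduct_eq (hΓ hx) hy₀
  rw [hyΓ x hx, hm]
  exact ⟨⟨m, rfl⟩, m.cast_nonneg⟩

theorem isPositive_of_subset_nnIntPts {N : ℕ} {Γ : Set (V N)} (hΓ : Γ ⊆ nnIntPts N) :
    IsPositive Γ := fun x hx hnx => funext fun j => by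
  obtain ⟨p, hp⟩ := hΓ hx j
  obtain ⟨q, hq⟩ := hΓ hnx j
  have : ((p + q : ℕ) : ℝ) = 0 := by rw [Nat.cast_add, ← hp, ← hq, Pi.neg_apply, add_neg_cancel]
  have hp0 : p = 0 := Nat.eq_zero_of_add_eq_zero_right (by exact_mod_cast this)
  rw [hp, hp0, Nat.cast_zero, Pi.zero_apply]

theorem diffSet_subset_intPts {N : ℕ} {Γ : Set (V N)} (hΓ : Γ ⊆ nnIntPts N) :
    diffSet Γ ⊆ intPts N := by
  rintro _ ⟨x, hx, y, hy, rfl⟩ j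
  obtain ⟨p, hp⟩ := hΓ hx j
  obtain ⟨q, hq⟩ := hΓ hy j
  exact ⟨p - q, by simp [hp, hq]⟩

theorem isDiscreteSet_of_subset_intPts {N : ℕ} {Λ : Set (V N)} (hΛ : Λ ⊆ intPts N) :
    IsDiscreteSet Λ := fun x hx => ⟨1, one_pos, fun y hy hxy => funext fun j => by
  obtain ⟨p, hp⟩ := hΛ hy j
  obtain ⟨q, hq⟩ := hΛ hx j
  have : |((p - q : ℤ) : ℝ)| < 1 := by
    simpa [hp, hq, Real.dist_eq] using (dist_le_pi_dist y x j).trans_lt hxy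
  have hpq : p = q := sub_eq_zero.1 (Int.abs_lt_one_iff.1 (by exact_mod_cast this))
  rw [hp, hq, hpq]⟩

theorem gammaRow_eq_closure {k l : ℕ} (S : Matrix (Fin k) (Fin l) ℤ) :
    GammaRow S = AddSubmonoid.closure (Set.range (rowVec S)) := by
  ext x
  simp [GammaRow, AddSubmonoid.mem_closure_range_iff_of_fintype, Nat.cast_smul_eq_nsmul]

theorem gammaRow_subset_nnIntPts {k l : ℕ} {S : Matrix (Fin k) (Fin l) ℤ}
    (hS : ∀ i j, 0 ≤ S i j) : GammaRow S ⊆ nnIntPts l := by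
  rintro _ ⟨c, rfl⟩ j
  refine ⟨∑ i, c i * (S i j).toNat, ?_⟩
  simp only [Finset.sum_apply, Pi.smul_apply, rowVec, smul_eq_mul, Nat.cast_sum, Nat.cast_mul]
  refine Finset.sum_congr rfl fun i _ => ?_
  rw [← Int.cast_natCast (S i j).toNat, Int.toNat_of_nonneg (hS i j)]

theorem isAffineSemigroup_gammaRow {k l : ℕ} {S : Matrix (Fin k) (Fin l) ℤ}
    (hS : ∀ i j, 0 ≤ S i j) : IsAffineSemigroup (GammaRow S) :=
  ⟨⟨Finset.univ.image (rowVec S), by simp [gammaRow_eq_closure]⟩,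
    isDiscreteSet_of_subset_intPts (diffSet_subset_intPts (gammaRow_subset_nnIntPts hS))⟩

theorem IsGenSet.subset {N : ℕ} {A Γ : Set (V N)} (h : IsGenSet A Γ) : A ⊆ Γ :=
  h ▸ AddSubmonoid.subset_closure

theorem IsGenSet.zero_mem {N : ℕ} {A Γ : Set (V N)} (h : IsGenSet A Γ) : (0 : V N) ∈ Γ :=
  h ▸ (AddSubmonoid.closure A).zero_mem

theorem isLift_mulVecLin {n l : ℕ} {Γ : Set (V n)} {Γ' : Set (V l)} {b : Fin l → V n}
    (h0 : (0 : V n) ∈ Γ) (hb : IsGenSet (Set.range b) (dualSemigroup Γ))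
    (hΓ' : IsAffineSemigroup Γ') (hΓ'nn : Γ' ⊆ nnIntPts l)
    (hmaps : ∀ x ∈ Γ, Matrix.of b *ᵥ x ∈ Γ') : IsLift Γ Γ' (Matrix.of b).mulVecLin := by
  have h0' : (0 : V l) ∈ Γ' := by simpa using hmaps 0 h0
  have hadj : ∀ x y, x ⬝ᵥ (y ᵥ* Matrix.of b) = (Matrix.of b *ᵥ x) ⬝ᵥ y := fun x y => by
    rw [dotProduct_comm, ← dotProduct_mulVec, dotProduct_comm]
  refine ⟨hΓ', isPositive_of_subset_nnIntPts hΓ'nn, hmaps,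
    fun y hy => ⟨y ᵥ* Matrix.of b, ?_, fun x _ => hadj x y⟩, fun z hz => ?_⟩
  · have hbΓ : ∀ j, b j ∈ Submodule.span ℝ Γ := fun j =>
      ((mem_dualSemigroup_iff h0).1 (hb.subset ⟨j, rfl⟩)).1
    refine (mem_dualSemigroup_iff h0).2 ⟨?_, fun x hx => ?_⟩
    · rw [vecMul_eq_sum]
      exact Submodule.sum_mem _ fun j _ => Submodule.smul_mem _ _ (hbΓ j)
    · rw [hadj]
      exact ((mem_dualSemigroup_iff h0').1 hy).2 _ (hmaps x hx)
  · rw [← hb, SetLike.mem_coe, AddSubmonoid.mem_closure_range_iff_of_fintype] at hz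
    obtain ⟨m, rfl⟩ := hz
    obtain ⟨y, hy, hyx⟩ := exists_mem_dualSemigroup_forall_dotProduct_eq h0' hΓ'nn
      (y₀ := fun j => (m j : ℝ)) fun j => ⟨m j, rfl⟩
    refine ⟨y, hy, fun x hx => ?_⟩
    rw [mulVecLin_apply, hyx _ (hmaps x hx), ← hadj, vecMul_eq_sum]
    simp only [Nat.cast_smul_eq_nsmul]
    rfl

theorem IsSlackMatrix.nonneg {n k l : ℕ} {Γ : Set (V n)} {S : Matrix (Fin k) (Fin l) ℤ}
    (hS : IsSlackMatrix Γ S) (i : Fin k) (j : Fin l) : 0 ≤ S i j := by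
  obtain ⟨a, b, -, -, ha, hb, hab⟩ := hS
  have hbj := (mem_dualSemigroup_iff ha.1.zero_mem).1 (hb.1.subset ⟨j, rfl⟩)
  exact_mod_cast hab i j ▸ (hbj.2 _ (ha.1.subset ⟨i, rfl⟩)).2

theorem IsSlackMatrix.exists_isLift_gammaRow {n k l r : ℕ} {Γ : Set (V n)}
    {S : Matrix (Fin k) (Fin l) ℤ} (hS : IsSlackMatrix Γ S) {B : Matrix (Fin k) (Fin r) ℤ}
    {C : Matrix (Fin r) (Fin l) ℤ} (hB : ∀ i t, 0 ≤ B i t) (hC : ∀ t j, 0 ≤ C t j)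
    (hBC : S = B * C) : ∃ ι : V n →ₗ[ℝ] V l, IsLift Γ (GammaRow C) ι := by
  obtain ⟨a, b, -, -, ha, hb, hab⟩ := hS
  have hgen : ∀ i, Matrix.of b *ᵥ a i ∈ GammaRow C := fun i => by
    refine ⟨fun t => (B i t).toNat, funext fun j => ?_⟩
    simp only [mulVec, of_apply, Finset.sum_apply, Pi.smul_apply, rowVec, smul_eq_mul]
    rw [dotProduct_comm, ← hab, hBC, mul_apply, Int.cast_sum]
    refine Finset.sum_congr rfl fun t _ => ?_
    rw [Int.cast_mul, ← Int.cast_natCast (B i t).toNat, Int.toNat_of_nonneg (hB i t)]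
  refine ⟨_, isLift_mulVecLin ha.1.zero_mem hb.1 (isAffineSemigroup_gammaRow hC)
    (gammaRow_subset_nnIntPts hC) fun x hx => ?_⟩
  rw [← ha.1, SetLike.mem_coe] at hx
  rw [gammaRow_eq_closure] at hgen ⊢
  exact (AddSubmonoid.closure_le (S := (AddSubmonoid.closure (Set.range (rowVec C))).comap
    (Matrix.of b).mulVecLin.toAddMonoidHom)).2 (Set.range_subset_iff.2 hgen) hx

theorem IsSlackMatrix.exists_factorization_of_isLift {n k l N : ℕ} {Γ : Set (V n)}
    {S : Matrix (Fin k) (Fin l) ℤ} (hS : IsSlackMatrix Γ S) {Γ' : Set (V N)}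
    {ι : V n →ₗ[ℝ] V N} (hlift : IsLift Γ Γ' ι) {A : Set (V N)} (hA : IsMinGenSet A Γ')
    [Fintype A] : ∃ (B : Matrix (Fin k) A ℤ) (C : Matrix A (Fin l) ℤ),
      (∀ i t, 0 ≤ B i t) ∧ (∀ t j, 0 ≤ C t j) ∧ S = B * C := by
  obtain ⟨a, b, -, -, ha, hb, hab⟩ := hS
  have hιa : ∀ i, ∃ c : A → ℕ, ι (a i) = ∑ t : A, c t • (t : V N) := fun i =>
    AddSubmonoid.mem_closure_iff_of_fintype.1 <| by
      rw [← SetLike.mem_coe, hA.1]; exact hlift.maps_to _ (ha.1.subset ⟨i, rfl⟩)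
  choose c hc using hιa
  choose y hy hyb using fun j => hlift.adjoint_surj (b j) (hb.1.subset ⟨j, rfl⟩)
  have hAy : ∀ (t : A) j, ∃ m : ℤ, (t : V N) ⬝ᵥ y j = m ∧ 0 ≤ m := fun t j => by
    have hyj := (mem_dualSemigroup_iff hA.1.zero_mem).1 (hy j)
    obtain ⟨⟨m, hm⟩, hnn⟩ := hyj.2 t (hA.1.subset t.2)
    exact ⟨m, hm, by exact_mod_cast hm ▸ hnn⟩
  choose C hCy hC using hAy
  refine ⟨Matrix.of fun i t => c i t, Matrix.of C, fun i t => Int.natCast_nonneg _, hC,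
    Matrix.ext fun i j => ?_⟩
  have : (S i j : ℝ) = ∑ t, (c i t : ℝ) * C t j := by
    rw [hab, hyb j _ (ha.1.subset ⟨i, rfl⟩), hc i, sum_dotProduct]
    simp [← Nat.cast_smul_eq_nsmul ℝ, smul_dotProduct, hCy]
  rw [mul_apply]
  exact_mod_cast this

theorem nnIntRank_le_card {m l ι : Type*} [Fintype m] [Fintype l] [Fintype ι]
    {A : Matrix m l ℤ} (B : Matrix m ι ℤ) (C : Matrix ι l ℤ) (hB : ∀ i t, 0 ≤ B i t)
    (hC : ∀ t j, 0 ≤ C t j) (hBC : A = B * C) : nnIntRank A ≤ Fintype.card ι :=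
  let e := Fintype.equivFin ι
  Nat.sInf_le ⟨B.submatrix id e.symm, C.submatrix e.symm id, fun _ _ => hB _ _, fun _ _ => hC _ _,
    by rw [submatrix_mul_equiv, ← hBC, submatrix_id_id]⟩

theorem exists_factorization_nnIntRank {m l : Type*} [Fintype m] [Fintype l] [DecidableEq l]
    {A : Matrix m l ℤ} (hA : ∀ i j, 0 ≤ A i j) :
    ∃ (B : Matrix m (Fin (nnIntRank A)) ℤ) (C : Matrix (Fin (nnIntRank A)) l ℤ),
      (∀ i t, 0 ≤ B i t) ∧ (∀ t j, 0 ≤ C t j) ∧ A = B * C :=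
  let e := Fintype.equivFin l
  Nat.sInf_mem (s := {r : ℕ | ∃ (B : Matrix m (Fin r) ℤ) (C : Matrix (Fin r) l ℤ),
      (∀ i j, 0 ≤ B i j) ∧ (∀ i j, 0 ≤ C i j) ∧ A = B * C})
    ⟨_, A.submatrix id e.symm, (1 : Matrix l l ℤ).submatrix e.symm id, fun _ _ => hA _ _,
      fun _ _ => by simp only [submatrix_apply, one_apply]; split_ifs <;> decide,
      by rw [submatrix_mul_equiv, Matrix.mul_one, submatrix_id_id]⟩

theorem IsSlackMatrix.nnIntRank_le_ncard_of_isLift {n k l N : ℕ} {Γ : Set (V n)}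
    {S : Matrix (Fin k) (Fin l) ℤ} (hS : IsSlackMatrix Γ S) {Γ' : Set (V N)}
    {ι : V n →ₗ[ℝ] V N} (hlift : IsLift Γ Γ' ι) {A : Set (V N)} (hA : IsMinGenSet A Γ') :
    nnIntRank S ≤ A.ncard := by
  have := (hA.finite hlift.lift_semigroup.1).fintype
  obtain ⟨B, C, hB, hC, hBC⟩ := hS.exists_factorization_of_isLift hlift hA
  rw [← Nat.card_coe_set_eq, Nat.card_eq_fintype_card]
  exact nnIntRank_le_card B C hB hC hBC

theorem yannakakis_affine_semigroups_general {n k l : ℕ} (Γ : Set (V n))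
    (S : Matrix (Fin k) (Fin l) ℤ) (hS : IsSlackMatrix Γ S) :
    IsLeast {r : ℕ | ∃ (N : ℕ) (Γ' : Set (V N)) (ι : (V n) →ₗ[ℝ] (V N)) (A : Set (V N)),
      IsLift Γ Γ' ι ∧ IsMinGenSet A Γ' ∧ A.ncard = r} (nnIntRank S) := by
  refine ⟨?_, fun r ⟨N, Γ', ι, A, hlift, hA, hr⟩ => hr ▸ hS.nnIntRank_le_ncard_of_isLift hlift hA⟩
  obtain ⟨B, C, hB, hC, hBC⟩ := exists_factorization_nnIntRank hS.nonneg
  obtain ⟨ι, hlift⟩ := hS.exists_isLift_gammaRow hB hC hBC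
  obtain ⟨A, hAC, hA⟩ := exists_isMinGenSet_subset (Set.finite_range (rowVec C))
  rw [← gammaRow_eq_closure] at hA
  have hAcard : A.ncard ≤ nnIntRank S := calc
    A.ncard ≤ (Set.range (rowVec C)).ncard := Set.ncard_le_ncard hAC (Set.finite_range _)
    _ ≤ nnIntRank S := by
      rw [← Nat.card_coe_set_eq]
      exact (Finite.card_range_le (rowVec C)).trans_eq (Nat.card_fin _)
  exact ⟨l, GammaRow C, ι, A, hlift, hA,
    le_antisymm hAcard (hS.nnIntRank_le_ncard_of_isLift hlift hA)⟩

/-- Yannakakis for affine semigroups: the minimal size of a lift of a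
positive affine semigroup `Γ` equals the nonnegative integer rank of its slack matrix. -/
theorem yannakakis_affine_semigroups {n k l : ℕ} (Γ : Set (V n))
    (hΓ : IsAffineSemigroup Γ) (hpos : IsPositive Γ)
    (S : Matrix (Fin k) (Fin l) ℤ) (hS : IsSlackMatrix Γ S) :
    IsLeast {r : ℕ | ∃ (N : ℕ) (Γ' : Set (V N)) (ι : (V n) →ₗ[ℝ] (V N)) (A : Set (V N)),
      IsLift Γ Γ' ι ∧ IsMinGenSet A Γ' ∧ A.ncard = r} (nnIntRank S) :=
  yannakakis_affine_semigroups_general Γ S hS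

end
end

section
/- Let A ∈ ℤ^{m×n} have rows a₁,…,a_m, let Γ = Γ_A^row be positive with Λ_A^row = ℤ^n, and let c, d ∈ ℤ^m and e ∈ ℤ. If ι : Γ → Γ̃ is a lift of Γ, then the integer program min{ Σᵢ cᵢ⟨aᵢ, x⟩ : x ∈ Γ*, Σᵢ dᵢ⟨aᵢ, x⟩ = e } and the lifted integer program min{ Σᵢ cᵢ⟨ι(aᵢ), y⟩ : y ∈ Γ̃*, Σᵢ dᵢ⟨ι(aᵢ), y⟩ = e } have the same set of attained objective values, and in particular the same minimum value. -/
open Matrix BigOperators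

noncomputable section

lemma rowVec_mem_GammaRow {m n : ℕ} (A : Matrix (Fin m) (Fin n) ℤ) (i : Fin m) :
    rowVec A i ∈ GammaRow A := by
  refine ⟨fun j => if j = i then 1 else 0, ?_⟩
  rw [Finset.sum_eq_single i]
  · simp
  · intro b _ hb; simp [hb]
  · intro h; exact absurd (Finset.mem_univ i) h

/-- Lifts of affine semigroups give equivalent integer programs: the set of
attained objective values of the original ILP over `Γ*` equals that of the lifted ILP
over `Γ̃*`; in particular the two programs have the same minimum value. -/
theorem lift_ilp_equivalence {m n N : ℕ} (A : Matrix (Fin m) (Fin n) ℤ)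
    (hpos : IsPositive (GammaRow A))
    (hlat : LambdaRow A = intPts n)
    (c d : Fin m → ℤ) (e : ℤ)
    (Γ' : Set (V N)) (ι : (V n) →ₗ[ℝ] (V N)) (hlift : IsLift (GammaRow A) Γ' ι) :
    {v : ℝ | ∃ x ∈ dualSemigroup (GammaRow A),
        (∑ i, (d i : ℝ) * (rowVec A i ⬝ᵥ x)) = (e : ℝ) ∧
        v = ∑ i, (c i : ℝ) * (rowVec A i ⬝ᵥ x)} =
    {v : ℝ | ∃ y ∈ dualSemigroup Γ',
        (∑ i, (d i : ℝ) * ((ι (rowVec A i)) ⬝ᵥ y)) = (e : ℝ) ∧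
        v = ∑ i, (c i : ℝ) * ((ι (rowVec A i)) ⬝ᵥ y)} := by
  ext v
  constructor
  · rintro ⟨x, hx, hd, hv⟩
    obtain ⟨y, hy, hxy⟩ := hlift.adjoint_surj x hx
    refine ⟨y, hy, ?_, ?_⟩
    · rw [← hd]; exact Finset.sum_congr rfl fun i _ => by
        rw [hxy (rowVec A i) (rowVec_mem_GammaRow A i)]
    · rw [hv]; exact Finset.sum_congr rfl fun i _ => by
        rw [hxy (rowVec A i) (rowVec_mem_GammaRow A i)]
  · rintro ⟨y, hy, hd, hv⟩
    obtain ⟨z, hz, hzy⟩ := hlift.adjoint_mem y hy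
    refine ⟨z, hz, ?_, ?_⟩
    · rw [← hd]; exact Finset.sum_congr rfl fun i _ => by
        rw [hzy (rowVec A i) (rowVec_mem_GammaRow A i)]
    · rw [hv]; exact Finset.sum_congr rfl fun i _ => by
        rw [hzy (rowVec A i) (rowVec_mem_GammaRow A i)]


end
end

section
/- The intersection of all Fibonacci semigroups satisfies ⋂_{n≥1} Γ^Fib_n = ℤ² ∩ {(x,y) ∈ ℝ² : 0 ≤ y ≤ φ²·x}, where φ = (1+√5)/2 is the golden ratio. -/
open Matrix BigOperators

noncomputable section

/-!
Both inclusions rest on `F_{m+2} - φ² F_m = ψ^m`, where `ψ = (1 - √5)/2`. For even `m` the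
right-hand side is nonnegative, so the slope `F_{2n+2} / F_{2n}` of each Fibonacci cone is at
least `φ²`, which gives `⊇`; and these slopes tend to `φ²`, so a point lying in every cone lies
in the limiting one, which gives `⊆`.
-/

section

open Real Filter Topology
open scoped goldenRatio

theorem fib_add_two_sub_goldenRatio_sq_mul_fib (m : ℕ) :
    (Nat.fib (m + 2) : ℝ) - φ ^ 2 * Nat.fib m = ψ ^ m := by
  linear_combination fib_succ_sub_goldenRatio_mul_fib (m + 1) +
    φ * fib_succ_sub_goldenRatio_mul_fib m + ψ ^ m * goldenRatio_add_goldenConj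

theorem tendsto_fib_add_two_div_fib_atTop :
    Tendsto (fun m ↦ (Nat.fib (m + 2) / Nat.fib m : ℝ)) atTop (𝓝 (φ ^ 2)) := by
  have hsplit : ∀ m, (Nat.fib (m + 2) / Nat.fib m : ℝ) =
      Nat.fib (m + 1 + 1) / Nat.fib (m + 1) * (Nat.fib (m + 1) / Nat.fib m) := fun m ↦ by
    rw [div_mul_div_cancel₀ (by exact_mod_cast (Nat.fib_pos.2 m.succ_pos).ne')]
  simp only [hsplit, sq]
  exact (tendsto_fib_succ_div_fib_atTop.comp (tendsto_add_atTop_nat 1)).mul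
    tendsto_fib_succ_div_fib_atTop

theorem fib_two_mul_mul_le_of_le_goldenRatio_sq_mul {x y : ℝ} (hx : 0 ≤ x)
    (hy : y ≤ φ ^ 2 * x) (n : ℕ) :
    (Nat.fib (2 * n) : ℝ) * y ≤ Nat.fib (2 * n + 2) * x := by
  have hψ : 0 ≤ ψ ^ (2 * n) := (even_two_mul n).pow_nonneg ψ
  have hfib := fib_add_two_sub_goldenRatio_sq_mul_fib (2 * n)
  calc (Nat.fib (2 * n) : ℝ) * y ≤ Nat.fib (2 * n) * (φ ^ 2 * x) := by gcongr
    _ ≤ Nat.fib (2 * n) * (φ ^ 2 * x) + ψ ^ (2 * n) * x := le_add_of_nonneg_right (mul_nonneg hψ hx)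
    _ = Nat.fib (2 * n + 2) * x := by linear_combination -x * hfib

theorem le_goldenRatio_sq_mul_of_eventually_fib_two_mul {x y : ℝ}
    (h : ∀ᶠ n in atTop, (Nat.fib (2 * n) : ℝ) * y ≤ Nat.fib (2 * n + 2) * x) :
    y ≤ φ ^ 2 * x := by
  have hlim : Tendsto (fun n ↦ (Nat.fib (2 * n + 2) / Nat.fib (2 * n) : ℝ) * x) atTop
      (𝓝 (φ ^ 2 * x)) :=
    (tendsto_fib_add_two_div_fib_atTop.comp
      (tendsto_id.const_mul_atTop' two_pos)).mul_const x
  refine ge_of_tendsto hlim ((h.and (eventually_ge_atTop 1)).mono fun n ⟨hn, hn1⟩ ↦ ?_)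
  have hpos : (0 : ℝ) < Nat.fib (2 * n) := by
    exact_mod_cast Nat.fib_pos.2 (by omega)
  rw [div_mul_eq_mul_div, le_div_iff₀ hpos]
  linarith

end

/-- The intersection of all Fibonacci semigroups is
`ℤ² ∩ {(x,y) : 0 ≤ y ≤ φ² x}`, with `φ = (1+√5)/2` the golden ratio. -/
theorem iInter_gammaFib :
    (⋂ n ∈ {n : ℕ | 1 ≤ n}, GammaFib n) =
      {p : V 2 | (∃ a : ℤ, p 0 = (a : ℝ)) ∧ (∃ b : ℤ, p 1 = (b : ℝ)) ∧
        0 ≤ p 1 ∧ p 1 ≤ ((1 + Real.sqrt 5) / 2) ^ 2 * p 0} := by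
  ext p
  simp only [Set.mem_iInter₂, Set.mem_ofPred_eq, GammaFib]
  constructor
  · intro h
    obtain ⟨ha, hb, hy, -⟩ := h 1 le_rfl
    refine ⟨ha, hb, by simpa using hy, le_goldenRatio_sq_mul_of_eventually_fib_two_mul ?_⟩
    exact Filter.eventually_atTop.2 ⟨1, fun n hn ↦ (h n hn).2.2.2⟩
  · rintro ⟨ha, hb, hy, hyx⟩ n -
    have hx : 0 ≤ p 0 := nonneg_of_mul_nonneg_right (hy.trans hyx) (by positivity)
    exact ⟨ha, hb, by positivity, fib_two_mul_mul_le_of_le_goldenRatio_sq_mul hx hyx n⟩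

end
end

section
/- For every n ≥ 1, the dual affine semigroup of the Fibonacci semigroup Γ^Fib_n is (Γ^Fib_n)* = ℤ² ∩ {(x,y) ∈ ℝ² : 0 ≤ x and F_{2n+2}·y ≥ −F_{2n}·x}. -/
open Matrix BigOperators

noncomputable section

/-- The dual of the Fibonacci semigroup `Γ^Fib_n` is
`ℤ² ∩ {(x,y) : 0 ≤ x and F_{2n+2}·y ≥ -F_{2n}·x}`. -/
theorem dual_gammaFib (n : ℕ) (hn : 1 ≤ n) :
    dualSemigroup (GammaFib n) =
      {p : V 2 | (∃ a : ℤ, p 0 = (a : ℝ)) ∧ (∃ b : ℤ, p 1 = (b : ℝ)) ∧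
        0 ≤ p 0 ∧ -((Nat.fib (2 * n) : ℝ)) * p 0 ≤ (Nat.fib (2 * n + 2) : ℝ) * p 1} := by
  have hF0 : (0:ℝ) < (Nat.fib (2*n) : ℝ) := by exact_mod_cast Nat.fib_pos.mpr (by omega)
  have hF2 : (0:ℝ) < (Nat.fib (2*n+2) : ℝ) := by exact_mod_cast Nat.fib_pos.mpr (by omega)
  have hFle : (Nat.fib (2*n) : ℝ) ≤ (Nat.fib (2*n+2) : ℝ) := by
    exact_mod_cast Nat.fib_mono (by omega)
  -- elements of Γ
  have h0 : (0 : V 2) ∈ GammaFib n := by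
    refine ⟨⟨0, by simp⟩, ⟨0, by simp⟩, by simp, by simp⟩
  have h10 : (![1,0] : V 2) ∈ GammaFib n := by
    refine ⟨⟨1, by simp⟩, ⟨0, by simp⟩, by simp, by simpa using hF2.le⟩
  have h11 : (![1,1] : V 2) ∈ GammaFib n := by
    refine ⟨⟨1, by simp⟩, ⟨1, by simp⟩, by simpa using hF0.le, by simpa using hFle⟩
  have hFF : (![(Nat.fib (2*n) : ℝ), (Nat.fib (2*n+2) : ℝ)] : V 2) ∈ GammaFib n := by
    refine ⟨⟨(Nat.fib (2*n) : ℤ), by simp⟩, ⟨(Nat.fib (2*n+2) : ℤ), by simp⟩, ?_, ?_⟩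
    · simpa using mul_nonneg hF0.le hF2.le
    · simp; nlinarith
  -- Γ ⊆ coneOf Γ
  have hsub : ∀ x ∈ GammaFib n, x ∈ coneOf (GammaFib n) := by
    intro x hx
    exact ⟨1, fun _ => 1, fun _ => x, fun _ => zero_le_one, fun _ => hx, by simp⟩
  -- elements of diffSet
  have d10 : (![1,0] : V 2) ∈ diffSet (GammaFib n) := ⟨![1,0], h10, 0, h0, by simp⟩
  have d01 : (![0,1] : V 2) ∈ diffSet (GammaFib n) := by
    refine ⟨![1,1], h11, ![1,0], h10, ?_⟩
    funext i; fin_cases i <;> simp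
  ext p
  constructor
  · rintro ⟨⟨hspan, hint⟩, hcone⟩
    obtain ⟨a, ha⟩ := hint _ d10
    obtain ⟨b, hb⟩ := hint _ d01
    simp [dotProduct, Fin.sum_univ_two] at ha hb
    have hc1 := hcone _ (hsub _ h10)
    have hc2 := hcone _ (hsub _ hFF)
    simp [dotProduct, Fin.sum_univ_two] at hc1 hc2
    exact ⟨⟨a, ha⟩, ⟨b, hb⟩, hc1, by linarith⟩
  · rintro ⟨⟨a, ha⟩, ⟨b, hb⟩, h1, h2⟩
    refine ⟨⟨?_, ?_⟩, ?_⟩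
    · have hp : p = p 0 • (![1,0] : V 2) + p 1 • (![0,1] : V 2) := by
        funext i; fin_cases i <;> simp
      rw [hp]
      exact Submodule.add_mem _
        (Submodule.smul_mem _ _ (Submodule.subset_span d10))
        (Submodule.smul_mem _ _ (Submodule.subset_span d01))
    · rintro v ⟨x, hx, y, hy, rfl⟩
      obtain ⟨⟨ax, hax⟩, ⟨bx, hbx⟩, -, -⟩ := hx
      obtain ⟨⟨ay, hay⟩, ⟨cy, hcy⟩, -, -⟩ := hy
      refine ⟨a * (ax - ay) + b * (bx - cy), ?_⟩
      simp [dotProduct, Fin.sum_univ_two, ha, hb, hax, hbx, hay, hcy]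
    · rintro x ⟨k, c, v, hc, hv, rfl⟩
      have key : (∑ i, c i • v i) ⬝ᵥ p = ∑ i, c i * (v i ⬝ᵥ p) := by
        simp only [dotProduct, Finset.sum_apply, Pi.smul_apply, smul_eq_mul,
          Finset.mul_sum, Finset.sum_mul, mul_assoc]
        rw [Finset.sum_comm]
      rw [key]
      apply Finset.sum_nonneg
      intro i _
      refine mul_nonneg (hc i) ?_
      obtain ⟨-, -, hv1, hv2⟩ := hv i
      have hx1 : 0 ≤ v i 1 := by nlinarith
      have hx0 : 0 ≤ v i 0 := by nlinarith
      have hd : v i ⬝ᵥ p = v i 0 * p 0 + v i 1 * p 1 := by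
        simp [dotProduct, Fin.sum_univ_two]
      rw [hd]
      nlinarith [mul_nonneg (by linarith : (0:ℝ) ≤ (Nat.fib (2*n+2):ℝ) * v i 0 - (Nat.fib (2*n):ℝ) * v i 1) h1,
        mul_nonneg hx1 (by linarith : (0:ℝ) ≤ (Nat.fib (2*n):ℝ) * p 0 + (Nat.fib (2*n+2):ℝ) * p 1)]
end
end

section
/- For every n ≥ 1, rank_{ℤ₊}(M_{2n+1}) ≥ rank_{ℤ₊}(M_n) + 1. -/
open Matrix BigOperators

noncomputable section

/-! Factor `M_{2n+1} = B C` over `ℤ₊` with inner dimension `r`. Its upper-left and lower-right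
`(n+1) × (n+1)` blocks are both `M_n` (the matrix is Toeplitz), so if some inner index `k` takes
no part in one of these blocks, deleting it factors `M_n` through `r - 1` indices.

Otherwise every `k` meets both blocks. Let `S = F_{2n-1}`, the largest entry of row `0` and of
column `n` within the upper block, and `u = e_0 - S·𝟙_low`, `v = e_n - S·𝟙_low`, with `low` the
indices of the lower block. Integrality gives `B₀ₖ ≤ S ≤ S·∑_{i ∈ low} Bᵢₖ`, and likewise for `C`,
so `uᵀBC v = ∑ₖ (uᵀB)ₖ (Cv)ₖ` is a sum of products of two nonpositive numbers, hence `≥ 0`.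
But Fibonacci telescoping sums and Cassini's identity evaluate `uᵀ M_{2n+1} v` to a negative
number. -/

open Finset

theorem Int.fib_neg_of_odd {m : ℤ} (hm : Odd m) : Int.fib (-m) = Int.fib m := by
  rw [Int.fib_neg, if_neg (Int.not_even_iff_odd.2 hm)]

theorem Int.fib_one_sub_two_mul (n : ℤ) :
    Int.fib (1 - 2 * n) = Int.fib (2 * n + 1) - Int.fib (2 * n) := by
  have h := Int.fib_add_two (2 * n - 1)
  have h' := Int.fib_neg_of_odd (m := 2 * n - 1) ⟨n - 1, by ring⟩
  rw [show 2 * n - 1 + 2 = 2 * n + 1 by ring, sub_add_cancel] at h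
  rw [neg_sub] at h'
  linarith

theorem Int.fib_two_mul_add_one_le_of_le {d e : ℤ} (he : e ≤ d) (hd : d ≤ 0) :
    Int.fib (2 * d + 1) ≤ Int.fib (2 * e + 1) := by
  rw [Int.fib_two_mul_add_one_eq_natFib_natAbs, Int.fib_two_mul_add_one_eq_natFib_natAbs]
  exact_mod_cast Nat.fib_mono (by omega)

theorem Int.sum_fib_add_two_mul_add_one (a : ℤ) (q : ℕ) :
    ∑ j : Fin q, Int.fib (a + 2 * j + 1) = Int.fib (a + 2 * q) - Int.fib a := by
  induction q with
  | zero => simp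
  | succ q ih =>
    rw [Fin.sum_univ_castSucc]
    simp only [Fin.val_castSucc, Fin.val_last, ih]
    rw [Nat.cast_succ, mul_add_one, ← add_assoc, Int.fib_add_two]
    ring

theorem Int.sum_fib_sub_two_mul_sub_one (b : ℤ) (q : ℕ) :
    ∑ j : Fin q, Int.fib (b - 2 * j - 1) = Int.fib b - Int.fib (b - 2 * q) := by
  induction q with
  | zero => simp
  | succ q ih =>
    have h := Int.fib_add_two (b - 2 * q - 2)
    rw [sub_add_cancel, show b - 2 * q - 2 + 1 = b - 2 * q - 1 by ring] at h
    rw [Fin.sum_univ_castSucc]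
    simp only [Fin.val_castSucc, Fin.val_last, ih]
    rw [Nat.cast_succ, mul_add_one, ← sub_sub, h]
    ring

theorem exists_nnIntRank_factorization {m l : Type*} [Fintype m] [Fintype l]
    {A : Matrix m l ℤ} (hA : ∀ i j, 0 ≤ A i j) :
    ∃ (B : Matrix m (Fin (nnIntRank A)) ℤ) (C : Matrix (Fin (nnIntRank A)) l ℤ),
      (∀ i k, 0 ≤ B i k) ∧ (∀ k j, 0 ≤ C k j) ∧ A = B * C := by
  classical
  let e := (Fintype.equivFin l).symm
  show nnIntRank A ∈ {r : ℕ | ∃ (B : Matrix m (Fin r) ℤ) (C : Matrix (Fin r) l ℤ),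
    (∀ i k, 0 ≤ B i k) ∧ (∀ k j, 0 ≤ C k j) ∧ A = B * C}
  refine Nat.sInf_mem ⟨_, A.submatrix id e, (1 : Matrix l l ℤ).submatrix e id,
    fun i k => hA _ _, fun k j => ?_, ?_⟩
  · simp only [submatrix_apply, one_apply]
    split_ifs <;> simp
  · rw [submatrix_mul_equiv, Matrix.mul_one, submatrix_id_id]

theorem nnIntRank_submatrix_lt {m l m' l' : Type*} [Fintype m'] [Fintype l'] {r : ℕ}
    {B : Matrix m (Fin r) ℤ} {C : Matrix (Fin r) l ℤ}
    (hB : ∀ i k, 0 ≤ B i k) (hC : ∀ k j, 0 ≤ C k j) (e : m' → m) (f : l' → l) (k : Fin r)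
    (hk : (∀ i, B (e i) k = 0) ∨ ∀ j, C k (f j) = 0) :
    nnIntRank ((B * C).submatrix e f) < r := by
  obtain ⟨r, rfl⟩ : ∃ r', r = r' + 1 := ⟨r - 1, by have := k.pos; omega⟩
  refine Nat.lt_succ_of_le (Nat.sInf_le ⟨B.submatrix e k.succAbove, C.submatrix k.succAbove f,
    fun _ _ => hB _ _, fun _ _ => hC _ _, ?_⟩)
  ext i j
  rw [submatrix_apply, mul_apply, mul_apply, Fin.sum_univ_succAbove _ k]
  rcases hk with hk | hk <;> simp [hk]

theorem le_mul_apply_of_nonneg {m l κ R : Type*} [Fintype κ] [Semiring R] [PartialOrder R]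
    [IsOrderedRing R] {B : Matrix m κ R} {C : Matrix κ l R} (hB : ∀ i k, 0 ≤ B i k)
    (hC : ∀ k j, 0 ≤ C k j) (i : m) (k : κ) (j : l) : B i k * C k j ≤ (B * C) i j := by
  rw [mul_apply]
  exact single_le_sum (fun k _ => mul_nonneg (hB i k) (hC k j)) (mem_univ k)

theorem dotProduct_mul_mulVec_nonneg {m l κ R : Type*} [Fintype m] [Fintype l] [Fintype κ]
    [CommRing R] [PartialOrder R] [IsOrderedRing R] {B : Matrix m κ R} {C : Matrix κ l R}
    {u : m → R} {v : l → R} (hu : u ᵥ* B ≤ 0) (hv : C *ᵥ v ≤ 0) :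
    0 ≤ u ⬝ᵥ (B * C) *ᵥ v := by
  rw [← mulVec_mulVec, dotProduct_mulVec]
  exact sum_nonneg fun k _ => mul_nonneg_of_nonpos_of_nonpos (hu k) (hv k)

def probeVec {m ι R : Type*} [Fintype ι] [DecidableEq m] [Ring R] (a : m) (s : R)
    (e : ι → m) : m → R :=
  Pi.single a 1 - s • ∑ i, Pi.single (e i) 1

theorem probeVec_dotProduct {m ι R : Type*} [Fintype m] [Fintype ι] [DecidableEq m] [Ring R]
    (a : m) (s : R) (e : ι → m) (x : m → R) :
    probeVec a s e ⬝ᵥ x = x a - s * ∑ i, x (e i) := by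
  simp [probeVec, sub_dotProduct, sum_dotProduct]

theorem probeVec_vecMul_nonpos {m l κ ι : Type*} [Fintype m] [Fintype κ] [Fintype ι]
    [DecidableEq m] {B : Matrix m κ ℤ} {C : Matrix κ l ℤ} (hB : ∀ i k, 0 ≤ B i k)
    (hC : ∀ k j, 0 ≤ C k j) {a : m} {e : ι → m} {S : ℤ}
    (hS : ∀ k, (∃ j, C k j ≠ 0 ∧ (B * C) a j ≤ S) ∧ ∃ i, B (e i) k ≠ 0) :
    probeVec a S e ᵥ* B ≤ 0 := by
  intro k
  obtain ⟨⟨j, hCj, hSj⟩, i, hBi⟩ := hS k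
  have hBa : B a k ≤ S :=
    calc B a k ≤ B a k * C k j := le_mul_of_one_le_right (hB a k) (by have := hC k j; omega)
      _ ≤ (B * C) a j := le_mul_apply_of_nonneg hB hC a k j
      _ ≤ S := hSj
  have hsum : 1 ≤ ∑ i, B (e i) k :=
    (show 1 ≤ B (e i) k by have := hB (e i) k; omega).trans
      (single_le_sum (fun i _ => hB (e i) k) (mem_univ i))
  show probeVec a S e ⬝ᵥ (fun i => B i k) ≤ 0
  rw [probeVec_dotProduct]
  nlinarith [hB a k]

theorem mulVec_probeVec_nonpos {m l κ ι : Type*} [Fintype l] [Fintype κ] [Fintype ι]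
    [DecidableEq l] {B : Matrix m κ ℤ} {C : Matrix κ l ℤ} (hB : ∀ i k, 0 ≤ B i k)
    (hC : ∀ k j, 0 ≤ C k j) {b : l} {f : ι → l} {S : ℤ}
    (hS : ∀ k, (∃ i, B i k ≠ 0 ∧ (B * C) i b ≤ S) ∧ ∃ j, C k (f j) ≠ 0) :
    C *ᵥ probeVec b S f ≤ 0 := by
  rw [← vecMul_transpose]
  refine probeVec_vecMul_nonpos (B := Cᵀ) (C := Bᵀ) (fun _ _ => hC _ _) (fun _ _ => hB _ _)
    fun k => ?_
  obtain ⟨⟨i, hBi, hSi⟩, hf⟩ := hS k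
  exact ⟨⟨i, hBi, by rwa [← transpose_mul]⟩, hf⟩

theorem fibZ_eq_fib (m : ℤ) : fibZ m = Int.fib m := by
  unfold fibZ
  split_ifs with h
  · exact (Int.fib_of_nonneg h).symm
  · obtain ⟨k, rfl⟩ : ∃ k : ℕ, m = -k := ⟨(-m).toNat, by omega⟩
    simp [Int.fib_neg_natCast]

theorem Mfib_apply (N : ℕ) (i j : Fin (N + 1)) :
    Mfib N i j = Int.fib (2 * ((i : ℤ) - j) + 1) :=
  fibZ_eq_fib _

theorem Mfib_pos (N : ℕ) (i j : Fin (N + 1)) : 0 < Mfib N i j := by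
  rw [Mfib_apply]
  exact Int.fib_two_mul_add_one_pos

theorem Mfib_le_of_sub_le {N : ℕ} {i j i' j' : Fin (N + 1)} (hij : (i : ℕ) ≤ j)
    (h : (j : ℕ) + i' ≤ j' + i) : Mfib N i j ≤ Mfib N i' j' := by
  rw [Mfib_apply, Mfib_apply]
  exact Int.fib_two_mul_add_one_le_of_le (by omega) (by omega)

theorem entrySum_Mfib (n : ℕ) :
    entrySum (Mfib n) = Int.fib (2 * n + 3) + Int.fib (2 * n + 1) - 2 := by
  have row (i : Fin (n + 1)) : ∑ j, Mfib n i j = Int.fib (2 * i + 2) - Int.fib (2 * i - 2 * n) :=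
    calc _ = ∑ j : Fin (n + 1), Int.fib ((2 * i + 2) - 2 * j - 1) :=
          sum_congr rfl fun j _ => by rw [Mfib_apply]; ring_nf
      _ = _ := by rw [Int.sum_fib_sub_two_mul_sub_one]; push_cast; ring_nf
  calc entrySum (Mfib n)
      = ∑ i : Fin (n + 1), Int.fib (1 + 2 * i + 1)
          - ∑ i : Fin (n + 1), Int.fib (-(2 * n + 1) + 2 * i + 1) := by
        rw [entrySum, ← sum_sub_distrib]
        exact sum_congr rfl fun i _ => by rw [row]; ring_nf
    _ = _ := by
        rw [Int.sum_fib_add_two_mul_add_one, Int.sum_fib_add_two_mul_add_one,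
          Int.fib_neg_of_odd ⟨n, rfl⟩]
        push_cast
        rw [show -(2 * (n : ℤ) + 1) + 2 * (n + 1) = 1 by ring,
          show (1 : ℤ) + 2 * (n + 1) = 2 * n + 3 by ring, Int.fib_one]
        ring

theorem fib_mul_entrySum_Mfib_add_one_lt (n : ℕ) :
    (Int.fib (2 * n + 1) - Int.fib (2 * n)) * entrySum (Mfib n) + 1
      < Int.fib (4 * n + 2) - Int.fib (2 * n) + (Int.fib (2 * n + 4) - 1) := by
  have h1 : Int.fib (2 * n + 1) = Int.fib (2 * n - 1) + Int.fib (2 * n) := by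
    linear_combination (norm := ring_nf) Int.fib_add_two (2 * n - 1)
  have h2 : Int.fib (2 * n + 2) = Int.fib (2 * n) + Int.fib (2 * n + 1) := Int.fib_add_two _
  have h3 : Int.fib (2 * n + 3) = Int.fib (2 * n + 1) + Int.fib (2 * n + 2) := by
    linear_combination (norm := ring_nf) Int.fib_add_two (2 * n + 1)
  have h4 : Int.fib (2 * n + 4) = Int.fib (2 * n + 2) + Int.fib (2 * n + 3) := by
    linear_combination (norm := ring_nf) Int.fib_add_two (2 * n + 2)
  have h42 : Int.fib (4 * n + 2)
      = Int.fib (2 * n) * Int.fib (2 * n + 1) + Int.fib (2 * n + 1) * Int.fib (2 * n + 2) := by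
    linear_combination (norm := ring_nf) Int.fib_add (2 * n + 1) (2 * n + 1)
  have cassini : Int.fib (2 * n + 1) * Int.fib (2 * n - 1) - Int.fib (2 * n) ^ 2 = 1 := by
    rw [Int.fib_succ_mul_fib_pred_sub_fib_sq]; simp [Int.natAbs_mul, pow_mul]
  have hpos : 0 < Int.fib (2 * n - 1) := by
    convert Int.fib_two_mul_add_one_pos (n := n - 1) using 2; ring
  have hx : 0 ≤ Int.fib (2 * n) := by
    have h := Int.fib_natCast (2 * n)
    push_cast at h
    exact h ▸ Int.natCast_nonneg _
  rw [entrySum_Mfib, h4, h3, h2, h42, h2]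
  -- with `x = F_{2n}`, `y = F_{2n+1}` and Cassini's `y (y - x) - x² = 1`, the right side minus
  -- the left side is `x (2y - x - 1) + 5y - 4 > 0`
  nlinarith [mul_nonneg hx hpos.le]

def upperIdx (n : ℕ) (i : Fin (n + 1)) : Fin (2 * n + 1 + 1) := ⟨i, by omega⟩

def lowerIdx (n : ℕ) (i : Fin (n + 1)) : Fin (2 * n + 1 + 1) := ⟨i + (n + 1), by omega⟩

@[simp]
theorem val_upperIdx (n : ℕ) (i : Fin (n + 1)) : (upperIdx n i : ℕ) = i := rfl

@[simp]
theorem val_lowerIdx (n : ℕ) (i : Fin (n + 1)) : (lowerIdx n i : ℕ) = i + (n + 1) := rfl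

theorem Mfib_submatrix_upperIdx (n : ℕ) :
    (Mfib (2 * n + 1)).submatrix (upperIdx n) (upperIdx n) = Mfib n := by
  ext i j
  simp [Mfib_apply, upperIdx]

theorem Mfib_submatrix_lowerIdx (n : ℕ) :
    (Mfib (2 * n + 1)).submatrix (lowerIdx n) (lowerIdx n) = Mfib n := by
  ext i j
  simp only [submatrix_apply, Mfib_apply, val_lowerIdx]
  push_cast
  ring_nf

theorem Mfib_upperIdx_zero_last (n : ℕ) :
    Mfib (2 * n + 1) (upperIdx n 0) (upperIdx n (Fin.last n))
      = Int.fib (2 * n + 1) - Int.fib (2 * n) := by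
  rw [← Int.fib_one_sub_two_mul, Mfib_apply, val_upperIdx, val_upperIdx, Fin.val_zero,
    Fin.val_last]
  ring_nf

theorem sum_Mfib_upperIdx_zero_lowerIdx (n : ℕ) :
    ∑ j, Mfib (2 * n + 1) (upperIdx n 0) (lowerIdx n j)
      = Int.fib (4 * n + 2) - Int.fib (2 * n) :=
  calc _ = ∑ j : Fin (n + 1), Int.fib (2 * n + 2 * j + 1) :=
        sum_congr rfl fun j _ => by
          rw [Mfib_apply, val_upperIdx, val_lowerIdx, Fin.val_zero,
            ← Int.fib_neg_of_odd (m := 2 * n + 2 * j + 1) ⟨n + j, by ring⟩]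
          push_cast
          ring_nf
    _ = _ := by
        rw [Int.sum_fib_add_two_mul_add_one]
        push_cast
        ring_nf

theorem sum_Mfib_lowerIdx_upperIdx_last (n : ℕ) :
    ∑ i, Mfib (2 * n + 1) (lowerIdx n i) (upperIdx n (Fin.last n)) = Int.fib (2 * n + 4) - 1 :=
  calc _ = ∑ i : Fin (n + 1), Int.fib (2 + 2 * i + 1) :=
        sum_congr rfl fun i _ => by
          rw [Mfib_apply, val_upperIdx, val_lowerIdx, Fin.val_last]
          push_cast
          ring_nf
    _ = _ := by
        rw [Int.sum_fib_add_two_mul_add_one, Int.fib_two]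
        push_cast
        ring_nf

theorem Mfib_probe_neg (n : ℕ) :
    probeVec (upperIdx n 0) (Mfib (2 * n + 1) (upperIdx n 0) (upperIdx n (Fin.last n)))
        (lowerIdx n) ⬝ᵥ Mfib (2 * n + 1) *ᵥ
      probeVec (upperIdx n (Fin.last n))
        (Mfib (2 * n + 1) (upperIdx n 0) (upperIdx n (Fin.last n))) (lowerIdx n) < 0 := by
  have hE : ∑ i, ∑ j, Mfib (2 * n + 1) (lowerIdx n i) (lowerIdx n j) = entrySum (Mfib n) := by
    rw [← Mfib_submatrix_lowerIdx n]
    rfl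
  have hS := Mfib_pos (2 * n + 1) (upperIdx n 0) (upperIdx n (Fin.last n))
  rw [Mfib_upperIdx_zero_last] at hS
  rw [probeVec_dotProduct]
  simp only [mulVec, dotProduct_comm _ (probeVec _ _ _), probeVec_dotProduct]
  rw [sum_sub_distrib, ← mul_sum, hE, Mfib_upperIdx_zero_last, sum_Mfib_upperIdx_zero_lowerIdx,
    sum_Mfib_lowerIdx_upperIdx_last]
  -- the value is `S * (1 + S * entrySum (Mfib n) - T₁ - T₂)` with `S = F_{2n+1} - F_{2n}`
  -- and `T₁`, `T₂` the two sums
  nlinarith [mul_pos hS (sub_pos.2 (fib_mul_entrySum_Mfib_add_one_lt n))]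

theorem Mfib_exists_unused {n r : ℕ} {B : Matrix (Fin (2 * n + 1 + 1)) (Fin r) ℤ}
    {C : Matrix (Fin r) (Fin (2 * n + 1 + 1)) ℤ} (hB : ∀ i k, 0 ≤ B i k) (hC : ∀ k j, 0 ≤ C k j)
    (hBC : Mfib (2 * n + 1) = B * C) :
    ∃ k, ((∀ i, B (upperIdx n i) k = 0) ∨ ∀ j, C k (upperIdx n j) = 0) ∨
      ((∀ i, B (lowerIdx n i) k = 0) ∨ ∀ j, C k (lowerIdx n j) = 0) := by
  by_contra! h
  have hu := probeVec_vecMul_nonpos hB hC (a := upperIdx n 0) (e := lowerIdx n)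
    (S := Mfib (2 * n + 1) (upperIdx n 0) (upperIdx n (Fin.last n))) fun k => by
      obtain ⟨⟨-, j, hj⟩, hlow, -⟩ := h k
      exact ⟨⟨upperIdx n j, hj, hBC ▸ Mfib_le_of_sub_le (by simp) (by simpa using j.is_le)⟩, hlow⟩
  have hv := mulVec_probeVec_nonpos hB hC (b := upperIdx n (Fin.last n)) (f := lowerIdx n)
    (S := Mfib (2 * n + 1) (upperIdx n 0) (upperIdx n (Fin.last n))) fun k => by
      obtain ⟨⟨⟨i, hi⟩, -⟩, -, hlow⟩ := h k
      exact ⟨⟨upperIdx n i, hi, hBC ▸ Mfib_le_of_sub_le (by simpa using i.is_le) (by simp)⟩, hlow⟩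
  have := dotProduct_mul_mulVec_nonneg hu hv
  rw [← hBC] at this
  exact (Mfib_probe_neg n).not_ge this

theorem nnIntRank_Mfib_growth_general (n : ℕ) :
    nnIntRank (Mfib n) + 1 ≤ nnIntRank (Mfib (2 * n + 1)) := by
  obtain ⟨B, C, hB, hC, hBC⟩ :=
    exists_nnIntRank_factorization fun i j => (Mfib_pos (2 * n + 1) i j).le
  obtain ⟨k, hk | hk⟩ := Mfib_exists_unused hB hC hBC
  · have := nnIntRank_submatrix_lt hB hC (upperIdx n) (upperIdx n) k hk
    rwa [← hBC, Mfib_submatrix_upperIdx] at this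
  · have := nnIntRank_submatrix_lt hB hC (lowerIdx n) (lowerIdx n) k hk
    rwa [← hBC, Mfib_submatrix_lowerIdx] at this

/-- For every `n ≥ 1`, `rank_{ℤ₊}(M_{2n+1}) ≥ rank_{ℤ₊}(M_n) + 1`. -/
theorem nnIntRank_Mfib_growth (n : ℕ) (hn : 1 ≤ n) :
    nnIntRank (Mfib n) + 1 ≤ nnIntRank (Mfib (2 * n + 1)) :=
  nnIntRank_Mfib_growth_general n

end
end
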